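/- Let D be a division ring. Then for each integer n ≥ 2, the matrix ring M_n(D) of n × n matrices over D is twin-good. -/

import Mathlib

/-!
If `A` is invertible, `U = A G` works as soon as `G`, `1 + G` and `1 - G` are invertible; block
sums of the integer matrices with characteristic polynomials `X² - X - 1` and `X³ - X - 1`, which
take unit values at `0` and `±1`, give such a `G` in every size `n ≥ 2`.

If `A` is singular, then as an endomorphism `f` of `Dⁿ` it is a unit times a nilpotent: choose
bases `v`, `w` with `f vᵢ = wᵢ` for `i < rank f` and `f vᵢ = 0` otherwise, and let `u` be the
automorphism `vᵢ ↦ wᵢ₋₁` (indices mod `n`). Then `u⁻¹ f` shifts `vᵢ` to `vᵢ₊₁` and kills the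
last `n - rank f ≥ 1` vectors, so it is nilpotent, and `f ± u = u (u⁻¹ f ± 1)` are units.
-/

open Matrix Module LinearMap

def IsTwinGood {R : Type*} [Ring R] (x : R) : Prop :=
  ∃ u, IsUnit u ∧ IsUnit (x + u) ∧ IsUnit (x - u)

section Ring

variable {R S : Type*} [Ring R] [Ring S]

namespace IsTwinGood

theorem map {F : Type*} [FunLike F R S] [RingHomClass F R S] (f : F) {x : R}
    (hx : IsTwinGood x) : IsTwinGood (f x) := by
  obtain ⟨u, hu, hadd, hsub⟩ := hx
  exact ⟨f u, hu.map f, by simpa using hadd.map f, by simpa using hsub.map f⟩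

theorem op {x : R} (hx : IsTwinGood x) : IsTwinGood (MulOpposite.op x) := by
  obtain ⟨u, hu, hadd, hsub⟩ := hx
  exact ⟨.op u, hu.op, by simpa using hadd.op, by simpa using hsub.op⟩

theorem isUnit_mul {a x : R} (ha : IsUnit a) (hx : IsTwinGood x) : IsTwinGood (a * x) := by
  obtain ⟨u, hu, hadd, hsub⟩ := hx
  exact ⟨a * u, ha.mul hu, by simpa [mul_add] using ha.mul hadd,
    by simpa [mul_sub] using ha.mul hsub⟩

end IsTwinGood

theorem isTwinGood_mul_of_isNilpotent {u g : R} (hu : IsUnit u) (hg : IsNilpotent g) :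
    IsTwinGood (u * g) :=
  ⟨u, hu, by simpa [mul_add] using hu.mul hg.isUnit_add_one,
    by simpa [mul_sub] using hu.mul hg.isUnit_sub_one⟩

end Ring

namespace Matrix

variable {R : Type*} [Ring R] {m n : Type*} [Fintype m] [Fintype n] [DecidableEq m] [DecidableEq n]

theorem isUnit_fromBlocks_zero {A : Matrix m m R} {B : Matrix n n R} (hA : IsUnit A)
    (hB : IsUnit B) : IsUnit (fromBlocks A 0 0 B) := by
  obtain ⟨A', hAA', hA'A⟩ := isUnit_iff_exists.1 hA
  obtain ⟨B', hBB', hB'B⟩ := isUnit_iff_exists.1 hB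
  exact isUnit_iff_exists.2 ⟨fromBlocks A' 0 0 B', by simp [fromBlocks_multiply, hAA', hBB'],
    by simp [fromBlocks_multiply, hA'A, hB'B]⟩

theorem _root_.IsTwinGood.fromBlocks_zero {A : Matrix m m R} {B : Matrix n n R}
    (hA : IsTwinGood A) (hB : IsTwinGood B) : IsTwinGood (fromBlocks A 0 0 B) := by
  obtain ⟨u, hu, huadd, husub⟩ := hA
  obtain ⟨v, hv, hvadd, hvsub⟩ := hB
  refine ⟨fromBlocks u 0 0 v, isUnit_fromBlocks_zero hu hv, ?_, ?_⟩
  · simpa [fromBlocks_add] using isUnit_fromBlocks_zero huadd hvadd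
  · simpa [sub_eq_add_neg, fromBlocks_neg, fromBlocks_add] using
      isUnit_fromBlocks_zero husub hvsub

theorem isTwinGood_one_fin_two : IsTwinGood (1 : Matrix (Fin 2) (Fin 2) R) := by
  have h : IsTwinGood (1 : Matrix (Fin 2) (Fin 2) ℤ) := by
    refine ⟨!![0, 1; 1, 1], ?_, ?_, ?_⟩ <;>
      simp [isUnit_iff_isUnit_det, one_fin_two, det_fin_two]
  simpa using h.map (Int.castRingHom R).mapMatrix

theorem isTwinGood_one_fin_three : IsTwinGood (1 : Matrix (Fin 3) (Fin 3) R) := by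
  have h : IsTwinGood (1 : Matrix (Fin 3) (Fin 3) ℤ) := by
    refine ⟨!![0, 1, 0; 0, 0, 1; 1, 1, 0], ?_, ?_, ?_⟩ <;>
      simp [isUnit_iff_isUnit_det, one_fin_three, det_fin_three]
  simpa using h.map (Int.castRingHom R).mapMatrix

theorem isTwinGood_one_fin {n : ℕ} (hn : 2 ≤ n) :
    IsTwinGood (1 : Matrix (Fin n) (Fin n) R) := by
  induction n using Nat.strong_induction_on with
  | _ n ih =>
    rcases (by omega : n = 2 ∨ n = 3 ∨ 4 ≤ n) with rfl | rfl | h4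
    · exact isTwinGood_one_fin_two
    · exact isTwinGood_one_fin_three
    · obtain ⟨m, rfl⟩ : ∃ m, n = m + 2 := ⟨n - 2, by omega⟩
      simpa [fromBlocks_one] using ((ih m (by omega) (by omega)).fromBlocks_zero
        isTwinGood_one_fin_two).map (reindexRingEquiv R finSumFinEquiv)

end Matrix

section Nilpotent

variable {R M : Type*} [Semiring R] [AddCommMonoid M] [Module R M]

theorem Module.End.isNilpotent_of_basis_apply {n : ℕ} (b : Basis (Fin n) R M) (g : End R M)
    (hg : ∀ i, g (b i) = 0 ∨ ∃ j, i < j ∧ g (b i) = b j) : IsNilpotent g := by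
  have pow_apply_eq_zero : ∀ t (i : Fin n), n ≤ i + t → (g ^ t) (b i) = 0 := by
    intro t
    induction t with
    | zero => intro i hi; omega
    | succ t ih =>
      intro i hi
      rw [pow_succ, Module.End.mul_apply]
      rcases hg i with h | ⟨j, hij, h⟩
      · simp [h]
      · rw [h]
        exact ih j (by rw [Fin.lt_def] at hij; omega)
  exact ⟨n, b.ext fun i => by simpa using pow_apply_eq_zero n i (by omega)⟩

end Nilpotent

section DivisionRing

variable {D V : Type*} [DivisionRing D] [AddCommGroup V] [Module D V] [FiniteDimensional D V]

theorem LinearMap.exists_basis_sum_apply_inl_inr {r k : ℕ} (f : V →ₗ[D] V)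
    (hr : finrank D (range f) = r) (hk : finrank D (ker f) = k) :
    ∃ v w : Basis (Fin r ⊕ Fin k) D V,
      (∀ a, f (v (.inl a)) = w (.inl a)) ∧ ∀ b, f (v (.inr b)) = 0 := by
  obtain ⟨C, hC⟩ := (ker f).exists_isCompl
  obtain ⟨C', hC'⟩ := (range f).exists_isCompl
  let e : C ≃ₗ[D] range f :=
    (Submodule.quotientEquivOfIsCompl _ _ hC).symm ≪≫ₗ f.quotKerEquivRange
  have hC'k : finrank D C' = k := by
    have h1 := Submodule.finrank_add_eq_of_isCompl hC'
    have h2 := f.finrank_range_add_finrank_ker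
    omega
  let bR := finBasisOfFinrankEq D (range f) hr
  let v := ((bR.map e.symm).prod (finBasisOfFinrankEq D (ker f) hk)).map
    (Submodule.prodEquivOfIsCompl _ _ hC.symm)
  let w := (bR.prod (finBasisOfFinrankEq D C' hC'k)).map (Submodule.prodEquivOfIsCompl _ _ hC')
  refine ⟨v, w, fun a => ?_, fun b => ?_⟩
  · have he : ∀ c : C, (e c : V) = f c := fun c => by
      simp [e, Submodule.quotientEquivOfIsCompl_symm_apply]
    simp [v, w, ← he]
  · simp [v]

theorem Module.End.exists_isUnit_isNilpotent_eq_mul (f : End D V) (hf : ¬Function.Injective f) :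
    ∃ u g : End D V, IsUnit u ∧ IsNilpotent g ∧ f = u * g := by
  obtain ⟨k, hk⟩ : ∃ k, finrank D (ker f) = k + 1 :=
    Nat.exists_eq_succ_of_ne_zero fun h => hf (ker_eq_bot.1 (Submodule.finrank_eq_zero.1 h))
  obtain ⟨v, w, hv_inl, hv_inr⟩ := f.exists_basis_sum_apply_inl_inr rfl hk
  let E := finSumFinEquiv (m := finrank D (range f)) (n := k + 1)
  let u := (v.reindex E).equiv (w.reindex E) (finRotate _).symm
  refine ⟨u, u.symm.toLinearMap ∘ₗ f, (Module.End.isUnit_iff _).2 u.bijective, ?_,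
    by ext; simp⟩
  refine isNilpotent_of_basis_apply (v.reindex E) _ fun i => ?_
  obtain ⟨j, rfl⟩ := E.surjective i
  rcases j with a | b
  · right
    refine ⟨finRotate _ (E (.inl a)), ?_, ?_⟩
    · refine (lt_finRotate_iff_ne_last (n := finrank D (range f) + k) (E (.inl a))).2 ?_
      simp [E, Fin.ext_iff]
      omega
    · simpa [u, hv_inl, Basis.equiv_symm] using
        (w.reindex E).equiv_apply (E (.inl a)) (v.reindex E) (finRotate _)
  · left
    simp [hv_inr]

theorem Module.End.isTwinGood_of_not_injective (f : End D V) (hf : ¬Function.Injective f) :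
    IsTwinGood f := by
  obtain ⟨u, g, hu, hg, rfl⟩ := f.exists_isUnit_isNilpotent_eq_mul hf
  exact isTwinGood_mul_of_isNilpotent hu hg

theorem Matrix.isTwinGood_of_not_isUnit {ι : Type*} [Fintype ι] [DecidableEq ι]
    {A : Matrix ι ι D} (hA : ¬IsUnit A) : IsTwinGood A := by
  let e := matrixRingEquivEndVecMulOpposite (ι := ι) (A := D)
  have hf : ¬Function.Injective (e A).unop := fun h => hA <| by
    rwa [← isUnit_map_iff e, ← isUnit_unop, LinearMap.isUnit_iff_ker_eq_bot, ker_eq_bot]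
  simpa using ((Module.End.isTwinGood_of_not_injective _ hf).op).map e.symm

end DivisionRing

/-- If `D` is a division ring, then `Mₙ(D)` is twin-good for every `n ≥ 2`. -/
theorem matrix_twinGood_of_divisionRing (D : Type*) [DivisionRing D]
    (n : ℕ) (hn : 2 ≤ n) :
    ∀ A : Matrix (Fin n) (Fin n) D, ∃ U : Matrix (Fin n) (Fin n) D,
      IsUnit U ∧ IsUnit (A + U) ∧ IsUnit (A - U) := by
  intro A
  show IsTwinGood A
  by_cases hA : IsUnit A
  · simpa using (Matrix.isTwinGood_one_fin hn).isUnit_mul hA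
  · exact Matrix.isTwinGood_of_not_isUnit hA
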